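/- Let N ≥ 1 and ξ = (ξ_{i,j})_{(i,j)∈B_N} with all ξ_{i,j} > 0, r₀ > 0. Define A_N(ξ) ∈ ℝ^{2^N × 2^N} by a_{ij} = r₀(1 + Σ_{(k,l) ∈ Π_{0→(N,i)}(N - ν_{i-1,j-1})} 1/ξ_{k,l}). Then for any outlet flow vector q ∈ ℝ^{2^N}, the quadratic form qᵀ A_N(ξ) q equals r₀ Φ² + Σ_{(i,j) ∈ B_N} r₀ q_{i,j}²/ξ_{i,j}, where Φ = Σ_j q_{N,j} and q_{i,j} denotes the induced flow in branch (i,j), defined recursively by q_{i,j} = q_{i+1,2j-1} + q_{i+1,2j}. -/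

import Mathlib

open Finset Matrix

/-- `ν_{i,j}`: the smallest `k` such that the binary digits of `i` and `j`
agree from position `k` on. -/
noncomputable def nuIdx (i j : ℕ) : ℕ :=
  sInf {k | ∀ l, k ≤ l → i.testBit l = j.testBit l}

/-- The resistance matrix `A_N(ξ)` of the dyadic tree (0-based outlet
indices): `a_{ij} = r₀ (1 + ∑_{(k,l) ∈ Π_{0→(N,i)}(N-ν_{i-1,j-1})} 1/ξ_{k,l})`,
the ancestor of outlet `i` at level `k` being branch `(k, (i-1)/2^{N-k}+1)`. -/
noncomputable def AN (N : ℕ) (r0 : ℝ) (ξ : ℕ → ℕ → ℝ) :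
    Matrix (Fin (2 ^ N)) (Fin (2 ^ N)) ℝ := fun i j =>
  r0 * (1 + ∑ k ∈ Finset.Icc 1 (N - nuIdx i.1 j.1),
    1 / ξ k (i.1 / 2 ^ (N - k) + 1))

/-!
Since `nuIdx i j ≤ m ↔ i / 2 ^ m = j / 2 ^ m`, the entry `a_{ij}` is `r₀` plus the sum of
`r₀ / ξ_{k,·}` over the levels `k` at which the outlets `i` and `j` have the same ancestor
`i / 2 ^ (N - k)`. Hence the quadratic form splits level by level into
`∑_l r₀ / ξ_{k,l+1} (∑_{i below l} q_i)²`, and the inner sum is the branch flow `q_{k,l+1}`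
by downward induction on the level.
-/

theorem testBit_eq_of_le_iff_div_two_pow_eq (i j k : ℕ) :
    (∀ l, k ≤ l → i.testBit l = j.testBit l) ↔ i / 2 ^ k = j / 2 ^ k := by
  constructor
  · intro h
    refine Nat.eq_of_testBit_eq fun l => ?_
    rw [Nat.testBit_div_two_pow, Nat.testBit_div_two_pow]
    exact h _ (Nat.le_add_left _ _)
  · intro h l hl
    obtain ⟨m, rfl⟩ := Nat.exists_eq_add_of_le' hl
    rw [← Nat.testBit_div_two_pow, h, Nat.testBit_div_two_pow]

theorem nuIdx_le_iff (i j k : ℕ) : nuIdx i j ≤ k ↔ i / 2 ^ k = j / 2 ^ k := by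
  rw [← testBit_eq_of_le_iff_div_two_pow_eq]
  have hne : {k | ∀ l, k ≤ l → i.testBit l = j.testBit l}.Nonempty := by
    refine ⟨i + j, (testBit_eq_of_le_iff_div_two_pow_eq i j _).2 ?_⟩
    rw [Nat.div_eq_of_lt, Nat.div_eq_of_lt]
    · exact (Nat.lt_two_pow_self).trans_le (Nat.pow_le_pow_right two_pos (Nat.le_add_left j i))
    · exact (Nat.lt_two_pow_self).trans_le (Nat.pow_le_pow_right two_pos (Nat.le_add_right i j))
  exact ⟨fun h l hl => Nat.sInf_mem hne l (h.trans hl), fun h => Nat.sInf_le h⟩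

theorem nuIdx_le_of_lt_two_pow {i j N : ℕ} (hi : i < 2 ^ N) (hj : j < 2 ^ N) : nuIdx i j ≤ N := by
  rw [nuIdx_le_iff, Nat.div_eq_of_lt hi, Nat.div_eq_of_lt hj]

theorem AN_apply (N : ℕ) (r0 : ℝ) (ξ : ℕ → ℕ → ℝ) (i j : Fin (2 ^ N)) :
    AN N r0 ξ i j = r0 + ∑ k ∈ Icc 1 N,
      if i.1 / 2 ^ (N - k) = j.1 / 2 ^ (N - k) then r0 / ξ k (i.1 / 2 ^ (N - k) + 1) else 0 := by
  have hν := nuIdx_le_of_lt_two_pow i.2 j.2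
  have hIcc : Icc 1 (N - nuIdx i j) = {k ∈ Icc 1 N | nuIdx i j ≤ N - k} := by
    ext k
    simp only [mem_Icc, mem_filter]
    omega
  simp only [AN, hIcc, sum_filter, nuIdx_le_iff, mul_add, mul_one, mul_sum, mul_ite, mul_zero,
    mul_one_div]

theorem sum_sum_ite_eq_sum_mul_sq {ι κ R : Type*} [Fintype ι] [DecidableEq κ] [CommSemiring R]
    (f : ι → κ) (s : Finset κ) (hf : ∀ i, f i ∈ s) (c : κ → R) (q : ι → R) :
    ∑ i, ∑ j, (if f i = f j then c (f i) * q i * q j else 0) =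
      ∑ l ∈ s, c l * (∑ i with f i = l, q i) ^ 2 := by
  have hrow : ∀ i, ∑ j, (if f i = f j then c (f i) * q i * q j else 0) =
      c (f i) * q i * ∑ j with f j = f i, q j := by
    intro i
    simp only [sum_filter, mul_sum, mul_ite, mul_zero, eq_comm]
  simp only [hrow]
  rw [← sum_fiberwise_of_maps_to (fun i _ => hf i)]
  refine sum_congr rfl fun l _ => ?_
  calc ∑ i with f i = l, c (f i) * q i * ∑ j with f j = f i, q j
      = ∑ i with f i = l, c l * q i * ∑ j with f j = l, q j :=
        sum_congr rfl fun i hi => by rw [(mem_filter.1 hi).2]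
    _ = c l * (∑ i with f i = l, q i) ^ 2 := by rw [← sum_mul, ← mul_sum, sq, mul_assoc]

theorem sum_filter_div_two_eq {ι M : Type*} [AddCommMonoid M] (s : Finset ι) (g : ι → ℕ)
    (l : ℕ) (q : ι → M) :
    ∑ i ∈ s with g i / 2 = l, q i =
      ∑ i ∈ s with g i = 2 * l, q i + ∑ i ∈ s with g i = 2 * l + 1, q i := by
  simp only [sum_filter, ← sum_add_distrib]
  refine sum_congr rfl fun i _ => ?_
  split_ifs <;> first | omega | simp

theorem sum_range_add_one_eq_sum_Icc {M : Type*} [AddCommMonoid M] (f : ℕ → M) (n : ℕ) :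
    ∑ l ∈ range n, f (l + 1) = ∑ j ∈ Icc 1 n, f j := by
  rw [range_eq_Ico, sum_Ico_add', zero_add, Ico_add_one_right_eq_Icc]

theorem div_two_pow_sub_eq_div_two {N k : ℕ} (hk : k < N) (i : ℕ) :
    i / 2 ^ (N - k) = i / 2 ^ (N - (k + 1)) / 2 := by
  rw [Nat.div_div_eq_div_mul, ← pow_succ]
  congr 2
  omega

theorem div_two_pow_sub_lt_two_pow {i N k : ℕ} (hi : i < 2 ^ N) (hk : k ≤ N) :
    i / 2 ^ (N - k) < 2 ^ k := by
  rw [Nat.div_lt_iff_lt_mul (by positivity), ← pow_add, Nat.add_sub_cancel' hk]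
  exact hi

theorem branch_flow_eq_sum {N : ℕ} (q : Fin (2 ^ N) → ℝ) (qb : ℕ → ℕ → ℝ)
    (hleaf : ∀ j : Fin (2 ^ N), qb N (j.1 + 1) = q j)
    (hrec : ∀ i ∈ Icc 1 (N - 1), ∀ j ∈ Icc 1 (2 ^ i),
      qb i j = qb (i + 1) (2 * j - 1) + qb (i + 1) (2 * j))
    {k : ℕ} (hk : 1 ≤ k) (hkN : k ≤ N) {l : ℕ} (hl : l < 2 ^ k) :
    qb k (l + 1) = ∑ i with i.1 / 2 ^ (N - k) = l, q i := by
  induction hkN using Nat.decreasingInduction generalizing l with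
  | self =>
    have hfiber : ∀ i : Fin (2 ^ N), i.1 / 2 ^ (N - N) = l ↔ i = ⟨l, hl⟩ := by
      simp [Fin.ext_iff]
    simp only [hfiber, filter_eq', mem_univ, if_true, sum_singleton]
    exact hleaf ⟨l, hl⟩
  | of_succ k hkN ih =>
    have hsplit : qb k (l + 1) = qb (k + 1) (2 * l + 1) + qb (k + 1) (2 * l + 1 + 1) := by
      have := hrec k (by simp only [mem_Icc]; omega) (l + 1) (by simp only [mem_Icc]; omega)
      rwa [show 2 * (l + 1) - 1 = 2 * l + 1 by omega, show 2 * (l + 1) = 2 * l + 1 + 1 by ring] at this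
    have h2k : 2 ^ (k + 1) = 2 * 2 ^ k := pow_succ' 2 k
    rw [hsplit, ih (by omega) (by omega), ih (by omega) (by omega),
      ← sum_filter_div_two_eq]
    simp only [div_two_pow_sub_eq_div_two hkN]

theorem stmt13_general (N : ℕ) (r0 : ℝ)
    (ξ : ℕ → ℕ → ℝ)
    (q : Fin (2 ^ N) → ℝ) (qb : ℕ → ℕ → ℝ)
    (hleaf : ∀ j : Fin (2 ^ N), qb N (j.1 + 1) = q j)
    (hrec : ∀ i ∈ Finset.Icc 1 (N - 1), ∀ j ∈ Finset.Icc 1 (2 ^ i),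
      qb i j = qb (i + 1) (2 * j - 1) + qb (i + 1) (2 * j)) :
    q ⬝ᵥ (AN N r0 ξ).mulVec q =
      r0 * (∑ j, q j) ^ 2 +
        ∑ i ∈ Finset.Icc 1 N, ∑ j ∈ Finset.Icc 1 (2 ^ i),
          r0 * (qb i j) ^ 2 / ξ i j := by
  set anc : ℕ → Fin (2 ^ N) → ℕ := fun k i => i.1 / 2 ^ (N - k)
  have hentry : ∀ i j, q i * (AN N r0 ξ i j * q j) = r0 * q i * q j +
      ∑ k ∈ Icc 1 N, if anc k i = anc k j then r0 / ξ k (anc k i + 1) * q i * q j else 0 := by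
    intro i j
    rw [AN_apply, add_mul, mul_add, sum_mul, mul_sum]
    congr 1
    · ring
    · exact sum_congr rfl fun k _ => by split_ifs <;> ring
  have hlevel : ∀ k ∈ Icc 1 N,
      ∑ i, ∑ j, (if anc k i = anc k j then r0 / ξ k (anc k i + 1) * q i * q j else 0) =
        ∑ j ∈ Icc 1 (2 ^ k), r0 * qb k j ^ 2 / ξ k j := by
    intro k hk
    rw [mem_Icc] at hk
    rw [sum_sum_ite_eq_sum_mul_sq (anc k) (range (2 ^ k))
        (fun i => mem_range.2 (div_two_pow_sub_lt_two_pow i.2 hk.2)) (fun l => r0 / ξ k (l + 1)),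
      ← sum_range_add_one_eq_sum_Icc]
    refine sum_congr rfl fun l hl => ?_
    rw [branch_flow_eq_sum q qb hleaf hrec hk.1 hk.2 (mem_range.1 hl)]
    ring
  calc q ⬝ᵥ AN N r0 ξ *ᵥ q
      = ∑ i, ∑ j, r0 * q i * q j + ∑ k ∈ Icc 1 N, ∑ i, ∑ j,
          (if anc k i = anc k j then r0 / ξ k (anc k i + 1) * q i * q j else 0) := by
        simp only [dotProduct, mulVec, mul_sum, hentry, sum_add_distrib]
        exact congrArg (_ + ·) ((sum_congr rfl fun _ _ => sum_comm).trans sum_comm)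
    _ = _ := by
        rw [sum_congr rfl hlevel, sq, sum_mul_sum, mul_sum]
        simp only [mul_sum, mul_assoc]

/-- The quadratic form of the resistance matrix is the dissipated energy:
`qᵀ A_N(ξ) q = r₀ Φ² + ∑_{(i,j)∈B_N} r₀ q_{i,j}²/ξ_{i,j}` where `Φ` is the
total outlet flow and the branch flows `qb` are defined recursively from the
outlet flows by `qb_{i,j} = qb_{i+1,2j-1} + qb_{i+1,2j}`. -/
theorem stmt13 (N : ℕ) (hN : 1 ≤ N) (r0 : ℝ) (hr0 : 0 < r0)
    (ξ : ℕ → ℕ → ℝ)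
    (hξ : ∀ i ∈ Finset.Icc 1 N, ∀ j ∈ Finset.Icc 1 (2 ^ i), 0 < ξ i j)
    (q : Fin (2 ^ N) → ℝ) (qb : ℕ → ℕ → ℝ)
    (hleaf : ∀ j : Fin (2 ^ N), qb N (j.1 + 1) = q j)
    (hrec : ∀ i ∈ Finset.Icc 1 (N - 1), ∀ j ∈ Finset.Icc 1 (2 ^ i),
      qb i j = qb (i + 1) (2 * j - 1) + qb (i + 1) (2 * j)) :
    q ⬝ᵥ (AN N r0 ξ).mulVec q =
      r0 * (∑ j, q j) ^ 2 +
        ∑ i ∈ Finset.Icc 1 N, ∑ j ∈ Finset.Icc 1 (2 ^ i),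
          r0 * (qb i j) ^ 2 / ξ i j :=
  stmt13_general N r0 ξ q qb hleaf hrec
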